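/- arXiv:2012.15749 — 3 statements merged into one kernel-verified Lean document; each statement's English description precedes it below -/
import Mathlib

section
/- Let E be a finite set and f : Finset E → ℝ be monotone, submodular, and normalized with f(∅) = 0. Let ∅ = G₀ ⊆ G₁ ⊆ ⋯ be the greedy sequence, where G_{i+1} = G_i ∪ {e_i} and e_i ∈ E maximizes the marginal gain f(G_i ∪ {e}) − f(G_i) over all e ∈ E. Then for every k ≥ 0 and every K ≥ 1, f(G_k) ≥ (1 − (1 − 1/K)^k) · max{ f(S) : S ⊆ E, |S| ≤ K }. -/
/-- Greedy maximization of a monotone submodular normalized set function: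
after `k` greedy steps, the value is at least `(1 - (1 - 1/K)^k)` times the value
of any set of cardinality at most `K` (in particular, of the optimal such set). -/
theorem greedy_submodular_bound {E : Type*} [Fintype E] [DecidableEq E]
    (f : Finset E → ℝ)
    (hmono : ∀ S T : Finset E, S ⊆ T → f S ≤ f T)
    (hsub : ∀ S T : Finset E, S ⊆ T → ∀ e : E, e ∉ T →
      f (insert e T) - f T ≤ f (insert e S) - f S)
    (hnorm : f ∅ = 0)
    (G : ℕ → Finset E) (e : ℕ → E)
    (hG0 : G 0 = ∅)
    (hGsucc : ∀ i : ℕ, G (i + 1) = insert (e i) (G i))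
    (hgreedy : ∀ i : ℕ, ∀ x : E,
      f (insert x (G i)) - f (G i) ≤ f (insert (e i) (G i)) - f (G i)) :
    ∀ (k K : ℕ), 1 ≤ K → ∀ S : Finset E, S.card ≤ K →
      (1 - (1 - 1 / (K : ℝ)) ^ k) * f S ≤ f (G k) := by
  -- telescoping submodularity
  have key : ∀ (T S : Finset E), f (S ∪ T) - f T ≤ ∑ x ∈ S, (f (insert x T) - f T) := by
    intro T S
    induction S using Finset.induction_on with
    | empty => simp
    | @insert a S ha ih =>
      rw [Finset.insert_union, Finset.sum_insert ha]
      have h1 : f (insert a (S ∪ T)) - f (S ∪ T) ≤ f (insert a T) - f T := by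
        by_cases haT : a ∈ S ∪ T
        · rw [Finset.insert_eq_self.mpr haT]
          have := hmono T (insert a T) (Finset.subset_insert a T)
          linarith
        · exact hsub T (S ∪ T) Finset.subset_union_right a haT
      linarith
  intro k K hK S hS
  have hK0 : (0:ℝ) < K := by exact_mod_cast hK
  -- per-step bound
  have step : ∀ i : ℕ, f S - f (G i) ≤ (K : ℝ) * (f (G (i+1)) - f (G i)) := by
    intro i
    have hΔ : 0 ≤ f (G (i+1)) - f (G i) := by
      have := hmono (G i) (G (i+1)) (by rw [hGsucc i]; exact Finset.subset_insert _ _)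
      linarith
    have h1 : f S - f (G i) ≤ ∑ x ∈ S, (f (insert x (G i)) - f (G i)) := by
      have := key (G i) S
      have := hmono S (S ∪ G i) Finset.subset_union_left
      linarith
    have h2 : ∑ x ∈ S, (f (insert x (G i)) - f (G i))
        ≤ ∑ _x ∈ S, (f (G (i+1)) - f (G i)) := by
      apply Finset.sum_le_sum
      intro x _
      rw [hGsucc i]
      exact hgreedy i x
    have h3 : ∑ _x ∈ S, (f (G (i+1)) - f (G i)) = (S.card : ℝ) * (f (G (i+1)) - f (G i)) := by
      rw [Finset.sum_const, nsmul_eq_mul]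
    have h4 : (S.card : ℝ) * (f (G (i+1)) - f (G i)) ≤ (K : ℝ) * (f (G (i+1)) - f (G i)) := by
      apply mul_le_mul_of_nonneg_right _ hΔ
      exact_mod_cast hS
    linarith
  -- main induction
  have main : ∀ k : ℕ, f S - f (G k) ≤ (1 - 1 / (K : ℝ)) ^ k * f S := by
    intro k
    induction k with
    | zero => simp [hG0, hnorm]
    | succ k ih =>
      have hstep := step k
      have h1 : f S - f (G (k+1)) ≤ (1 - 1 / (K : ℝ)) * (f S - f (G k)) := by
        have : (1 / (K : ℝ)) * (f S - f (G k)) ≤ f (G (k+1)) - f (G k) := by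
          rw [div_mul_eq_mul_div, one_mul, div_le_iff₀ hK0]
          linarith [hstep]
        nlinarith
      have hc : (0:ℝ) ≤ 1 - 1 / (K : ℝ) := by
        have : 1 / (K : ℝ) ≤ 1 := by
          rw [div_le_one hK0]; exact_mod_cast hK
        linarith
      calc f S - f (G (k+1)) ≤ (1 - 1 / (K : ℝ)) * (f S - f (G k)) := h1
        _ ≤ (1 - 1 / (K : ℝ)) * ((1 - 1 / (K : ℝ)) ^ k * f S) :=
            mul_le_mul_of_nonneg_left ih hc
        _ = (1 - 1 / (K : ℝ)) ^ (k+1) * f S := by ring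
  have := main k
  nlinarith [this]
end

section
/- Let E be a finite set and f : Finset E → ℝ be monotone, submodular, normalized with f(∅) = 0, and nonnegative. Let G_k denote the greedy set after k steps (each step adding an element of E maximizing the marginal gain of f). Then for every ε ∈ (0, 1) and every K ≥ 1, if k ≥ K · ln(1/ε), then f(G_k) ≥ (1 − ε) · max{ f(S) : S ⊆ E, |S| ≤ K }. In particular, the value gathered by the greedy procedure after on the order of log(1/ε) rounds (per budget unit) is at least 1 − ε times that of the optimal size-K set. -/
/-- Telescoping bound for submodular functions. -/
lemma submod_telescope {E : Type*} [DecidableEq E]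
    (f : Finset E → ℝ)
    (hmono : ∀ S T : Finset E, S ⊆ T → f S ≤ f T)
    (hsub : ∀ S T : Finset E, S ⊆ T → ∀ e : E, e ∉ T →
      f (insert e T) - f T ≤ f (insert e S) - f S) :
    ∀ (A B : Finset E), f (A ∪ B) - f B ≤ ∑ x ∈ A, (f (insert x B) - f B) := by
  intro A
  induction A using Finset.induction with
  | empty => intro B; simp
  | insert _ _ ha ih =>
    rename_i a A
    intro B
    rw [Finset.sum_insert ha, Finset.insert_union]
    by_cases hab : a ∈ A ∪ B
    · rw [Finset.insert_eq_self.mpr hab]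
      have h1 := ih B
      have h2 : (0:ℝ) ≤ f (insert a B) - f B := by
        have := hmono B (insert a B) (Finset.subset_insert a B); linarith
      linarith
    · have h1 : f (insert a (A ∪ B)) - f (A ∪ B) ≤ f (insert a B) - f B :=
        hsub B (A ∪ B) Finset.subset_union_right a hab
      have h2 := ih B
      linarith

/-- Greedy maximization of a monotone submodular normalized nonnegative set
function: for any `ε ∈ (0,1)` and budget `K ≥ 1`, after `k ≥ K * ln(1/ε)` greedy
steps the value gathered is at least `(1 - ε)` times the value of any set of
cardinality at most `K` (in particular, of the optimal size-`K` set). -/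
theorem greedy_submodular_eps_bound {E : Type*} [Fintype E] [DecidableEq E]
    (f : Finset E → ℝ)
    (hmono : ∀ S T : Finset E, S ⊆ T → f S ≤ f T)
    (hsub : ∀ S T : Finset E, S ⊆ T → ∀ e : E, e ∉ T →
      f (insert e T) - f T ≤ f (insert e S) - f S)
    (hnorm : f ∅ = 0)
    (hnonneg : ∀ S : Finset E, 0 ≤ f S)
    (G : ℕ → Finset E) (e : ℕ → E)
    (hG0 : G 0 = ∅)
    (hGsucc : ∀ i : ℕ, G (i + 1) = insert (e i) (G i))
    (hgreedy : ∀ i : ℕ, ∀ x : E,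
      f (insert x (G i)) - f (G i) ≤ f (insert (e i) (G i)) - f (G i)) :
    ∀ (ε : ℝ), 0 < ε → ε < 1 → ∀ (K : ℕ), 1 ≤ K → ∀ (k : ℕ),
      (K : ℝ) * Real.log (1 / ε) ≤ (k : ℝ) →
      ∀ S : Finset E, S.card ≤ K → (1 - ε) * f S ≤ f (G k) := by
  intro ε hε0 hε1 K hK k hk S hScard
  have hKpos : (0:ℝ) < K := by exact_mod_cast hK
  -- one-step contraction
  have step : ∀ i : ℕ, f S - f (G (i+1)) ≤ (1 - 1/(K:ℝ)) * (f S - f (G i)) := by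
    intro i
    set g : ℝ := f (G (i+1)) - f (G i) with hg
    have hgnn : 0 ≤ g := by
      have := hmono (G i) (G (i+1)) (by rw [hGsucc]; exact Finset.subset_insert _ _)
      linarith
    -- f S - f (G i) ≤ K * g
    have key : f S - f (G i) ≤ (K:ℝ) * g := by
      have h1 : f S ≤ f (S ∪ G i) := hmono _ _ Finset.subset_union_left
      have h2 := submod_telescope f hmono hsub S (G i)
      have h3 : ∑ x ∈ S, (f (insert x (G i)) - f (G i)) ≤ ∑ _x ∈ S, g := by
        apply Finset.sum_le_sum
        intro x _
        have := hgreedy i x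
        rw [hg, hGsucc]
        linarith
      have h4 : ∑ _x ∈ S, g = (S.card : ℝ) * g := by
        rw [Finset.sum_const, nsmul_eq_mul]
      have h5 : (S.card : ℝ) * g ≤ (K:ℝ) * g := by
        apply mul_le_mul_of_nonneg_right _ hgnn
        exact_mod_cast hScard
      linarith
    have : f S - f (G i) ≤ (K:ℝ) * g := key
    have hgK : (f S - f (G i)) / K ≤ g := by
      rw [div_le_iff₀ hKpos]; linarith [key]
    have : f S - f (G (i+1)) = (f S - f (G i)) - g := by rw [hg]; ring
    rw [this]
    have : (1 - 1/(K:ℝ)) * (f S - f (G i)) = (f S - f (G i)) - (f S - f (G i)) / K := by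
      field_simp
    rw [this]
    linarith
  -- geometric decay
  have decay : ∀ k : ℕ, f S - f (G k) ≤ (1 - 1/(K:ℝ))^k * f S := by
    intro k
    induction k with
    | zero => simp [hG0, hnorm]
    | succ n ih =>
      have h1 := step n
      have hc : (0:ℝ) ≤ 1 - 1/(K:ℝ) := by
        rw [sub_nonneg, div_le_one hKpos]; exact_mod_cast hK
      calc f S - f (G (n+1)) ≤ (1 - 1/(K:ℝ)) * (f S - f (G n)) := h1
        _ ≤ (1 - 1/(K:ℝ)) * ((1 - 1/(K:ℝ))^n * f S) := by
            apply mul_le_mul_of_nonneg_left ih hc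
        _ = (1 - 1/(K:ℝ))^(n+1) * f S := by ring
  -- (1 - 1/K)^k ≤ ε
  have hc : (0:ℝ) ≤ 1 - 1/(K:ℝ) := by
    rw [sub_nonneg, div_le_one hKpos]; exact_mod_cast hK
  have hpow : (1 - 1/(K:ℝ))^k ≤ ε := by
    have h1 : (1 - 1/(K:ℝ)) ≤ Real.exp (-(1/(K:ℝ))) := by
      have := Real.add_one_le_exp (-(1/(K:ℝ)))
      linarith
    have h2 : (1 - 1/(K:ℝ))^k ≤ (Real.exp (-(1/(K:ℝ))))^k :=
      pow_le_pow_left₀ hc h1 k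
    have h3 : (Real.exp (-(1/(K:ℝ))))^k = Real.exp ((k:ℝ) * (-(1/(K:ℝ)))) := by
      rw [← Real.exp_nat_mul]
    have h4 : Real.exp ((k:ℝ) * (-(1/(K:ℝ)))) ≤ ε := by
      rw [← Real.exp_log hε0]
      apply Real.exp_le_exp.mpr
      have hlog : Real.log (1/ε) ≤ (k:ℝ) / K := by
        rw [le_div_iff₀ hKpos]
        linarith [hk]
      rw [Real.log_div one_ne_zero (ne_of_gt hε0), Real.log_one] at hlog
      have : (k:ℝ) * (-(1/(K:ℝ))) = -((k:ℝ)/K) := by ring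
      rw [this]
      linarith
    calc (1 - 1/(K:ℝ))^k ≤ (Real.exp (-(1/(K:ℝ))))^k := h2
      _ = Real.exp ((k:ℝ) * (-(1/(K:ℝ)))) := h3
      _ ≤ ε := h4
  have hfS : 0 ≤ f S := hnonneg S
  have := decay k
  nlinarith [mul_le_mul_of_nonneg_right hpow hfS]
end

section
/- Let Ω be a finite type with a probability mass function p : Ω → ℝ (p(ω) ≥ 0, ∑_ω p(ω) = 1), let Q be a finite index set, and for each i ∈ Q let Y_i be a finite type with conditional probability mass functions q_i(· | ω) on Y_i for each ω ∈ Ω (so q_i(y | ω) ≥ 0 and ∑_y q_i(y | ω) = 1). For S ⊆ Q, let the joint distribution of (ω, (y_i)_{i∈S}) be p(ω)·∏_{i∈S} q_i(y_i | ω) (conditional independence of observations given ω), and define the mutual information I(S) = H(Y_S) − H(Y_S | Ω), where H(Y_S) = −∑_{y∈∏_{i∈S}Y_i} (∑_ω p(ω)∏_{i∈S} q_i(y_i|ω))·log(∑_ω p(ω)∏_{i∈S} q_i(y_i|ω)) and H(Y_S | Ω) = −∑_ω p(ω) ∑_{y∈∏_{i∈S}Y_i} (∏_{i∈S} q_i(y_i|ω))·log(∏_{i∈S}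 q_i(y_i|ω)) (with the convention 0·log 0 = 0). Then I is submodular: for all S ⊆ T ⊆ Q and every e ∈ Q \ T, I(S ∪ {e}) − I(S) ≥ I(T ∪ {e}) − I(T). -/
open scoped BigOperators

/-- The joint probability of observing the answer tuple `y` to the set of
queries `S`: `∑ ω, p ω * ∏ i ∈ S, q i ω (y i)`. -/
noncomputable def jointProb {Ω Q : Type*} [Fintype Ω] {Y : Q → Type*}
    (p : Ω → ℝ) (q : ∀ i : Q, Ω → Y i → ℝ) (S : Finset Q)
    (y : ∀ i : S, Y i) : ℝ :=
  ∑ ω : Ω, p ω * ∏ i : S, q i ω (y i)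

/-- The entropy `H(Y_S)` of the answers to the set of queries `S`
(with natural logarithm, and with the convention `0 * log 0 = 0`). -/
noncomputable def entropyAnswers {Ω Q : Type*} [Fintype Ω] [DecidableEq Q]
    {Y : Q → Type*} [∀ i, Fintype (Y i)]
    (p : Ω → ℝ) (q : ∀ i : Q, Ω → Y i → ℝ) (S : Finset Q) : ℝ :=
  -∑ y : ∀ i : S, Y i, jointProb p q S y * Real.log (jointProb p q S y)

/-- The conditional entropy `H(Y_S ∣ Ω)` of the answers to the set of queries
`S` given the parameter. -/
noncomputable def condEntropyAnswers {Ω Q : Type*} [Fintype Ω] [DecidableEq Q]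
    {Y : Q → Type*} [∀ i, Fintype (Y i)]
    (p : Ω → ℝ) (q : ∀ i : Q, Ω → Y i → ℝ) (S : Finset Q) : ℝ :=
  -∑ ω : Ω, p ω *
      ∑ y : ∀ i : S, Y i,
        (∏ i : S, q i ω (y i)) * Real.log (∏ i : S, q i ω (y i))

/-- The mutual information `I(S) = H(Y_S) − H(Y_S ∣ Ω)` between the parameter
and the answers to the set of queries `S`. -/
noncomputable def mutualInfoQueries {Ω Q : Type*} [Fintype Ω] [DecidableEq Q]
    {Y : Q → Type*} [∀ i, Fintype (Y i)]
    (p : Ω → ℝ) (q : ∀ i : Q, Ω → Y i → ℝ) (S : Finset Q) : ℝ :=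
  entropyAnswers p q S - condEntropyAnswers p q S


open Finset

namespace MISub

variable {Q : Type*} [DecidableEq Q] {Y : Q → Type*}

/-- Restriction of a tuple on `U` to a tuple on `A ⊆ U`. -/
def resFn {A U : Finset Q} (h : A ⊆ U) (y : ∀ i : U, Y i) : ∀ i : A, Y i :=
  fun i => y ⟨i.1, h i.2⟩

/-- Glue tuples on `A` and `D` into a tuple on `U = A ∪ D`. -/
def glueFn {A D U : Finset Q} (hU : U = A ∪ D)
    (z : ∀ i : A, Y i) (w : ∀ i : D, Y i) : ∀ i : U, Y i :=
  fun i => if h : (i : Q) ∈ A then z ⟨i, h⟩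
    else w ⟨i, (Finset.mem_union.1 (hU ▸ i.2)).resolve_left h⟩

lemma res_glue {A D U : Finset Q} (hU : U = A ∪ D) (hA : A ⊆ U)
    (z : ∀ i : A, Y i) (w : ∀ i : D, Y i) :
    resFn hA (glueFn hU z w) = z := by
  funext i
  simp [resFn, glueFn, i.2]

lemma resD_glue {A D U : Finset Q} (hU : U = A ∪ D) (hd : Disjoint A D) (hD : D ⊆ U)
    (z : ∀ i : A, Y i) (w : ∀ i : D, Y i) :
    resFn hD (glueFn hU z w) = w := by
  funext i
  have : (i : Q) ∉ A := Finset.disjoint_right.1 hd i.2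
  simp [resFn, glueFn, this]

lemma glue_res {A D U : Finset Q} (hU : U = A ∪ D) (hA : A ⊆ U) (hD : D ⊆ U)
    (y : ∀ i : U, Y i) :
    glueFn hU (resFn hA y) (resFn hD y) = y := by
  funext i
  by_cases h : (i : Q) ∈ A <;> simp [resFn, glueFn, h]

/-- The tuple equivalence corresponding to splitting `U = A ∪ D`. -/
def tupleEquiv {A D U : Finset Q} (hU : U = A ∪ D) (hd : Disjoint A D) :
    ((∀ i : A, Y i) × (∀ i : D, Y i)) ≃ (∀ i : U, Y i) where
  toFun zw := glueFn hU zw.1 zw.2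
  invFun y := (resFn (hU ▸ Finset.subset_union_left) y,
               resFn (hU ▸ Finset.subset_union_right) y)
  left_inv zw := by
    ext1
    · exact res_glue hU (hU ▸ Finset.subset_union_left) zw.1 zw.2
    · exact resD_glue hU hd (hU ▸ Finset.subset_union_right) zw.1 zw.2
  right_inv y := glue_res hU (hU ▸ Finset.subset_union_left) (hU ▸ Finset.subset_union_right) y

/-- The index equivalence corresponding to splitting `U = A ∪ D`. -/
def idxEquiv {A D U : Finset Q} (hU : U = A ∪ D) (hd : Disjoint A D) :
    (A : Type _) ⊕ (D : Type _) ≃ (U : Type _) where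
  toFun := Sum.elim (fun a => ⟨a.1, hU ▸ Finset.mem_union_left _ a.2⟩)
    (fun d => ⟨d.1, hU ▸ Finset.mem_union_right _ d.2⟩)
  invFun i := if h : (i : Q) ∈ A then .inl ⟨i, h⟩
    else .inr ⟨i, (Finset.mem_union.1 (hU ▸ i.2)).resolve_left h⟩
  left_inv x := by
    rcases x with a | d
    · simp [a.2]
    · have : (d : Q) ∉ A := Finset.disjoint_right.1 hd d.2
      simp [this]
  right_inv i := by
    by_cases h : (i : Q) ∈ A <;> simp [h]

lemma sum_split {A D U : Finset Q} (hU : U = A ∪ D) (hd : Disjoint A D)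
    [∀ i, Fintype (Y i)] (f : (∀ i : U, Y i) → ℝ) :
    ∑ y : ∀ i : U, Y i, f y
      = ∑ z : ∀ i : A, Y i, ∑ w : ∀ i : D, Y i, f (glueFn hU z w) := by
  calc ∑ y : ∀ i : U, Y i, f y
      = ∑ zw : ((∀ i : A, Y i) × (∀ i : D, Y i)), f (tupleEquiv hU hd zw) :=
        (Fintype.sum_equiv (tupleEquiv hU hd) _ _ (fun zw => rfl)).symm
    _ = _ := Fintype.sum_prod_type _
    _ = _ := rfl

lemma prod_split {A D U : Finset Q} (hU : U = A ∪ D) (hd : Disjoint A D)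
    (F : ∀ j : Q, Y j → ℝ) (z : ∀ i : A, Y i) (w : ∀ i : D, Y i) :
    (∏ i : U, F i (glueFn hU z w i))
      = (∏ i : A, F i (z i)) * ∏ i : D, F i (w i) := by
  calc (∏ i : U, F i (glueFn hU z w i))
      = ∏ j : (A : Type _) ⊕ (D : Type _),
          F (idxEquiv hU hd j) (glueFn hU z w (idxEquiv hU hd j)) :=
        (Fintype.prod_equiv (idxEquiv hU hd) _ _ (fun j => rfl)).symm
    _ = _ := by
        rw [Fintype.prod_sum_type]
        congr 1
        · exact Finset.prod_congr rfl fun a _ => by simp [idxEquiv, glueFn, a.2]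
        · exact Finset.prod_congr rfl fun d _ => by
            have hd' : (d : Q) ∉ A := Finset.disjoint_right.1 hd d.2
            simp [idxEquiv, glueFn, hd']

lemma sum_tuple_prod [∀ i, Fintype (Y i)] (D : Finset Q) (F : ∀ j : Q, Y j → ℝ) :
    ∑ w : ∀ i : D, Y i, ∏ i : D, F i (w i) = ∏ i : D, ∑ v : Y i.1, F i v := by
  have h := Finset.prod_univ_sum (fun i : D => (Finset.univ : Finset (Y i.1)))
    (fun i v => F i v)
  rw [Fintype.piFinset_univ] at h
  exact h.symm

section Prob

variable {Q : Type*} [DecidableEq Q] {Y : Q → Type*} [∀ i, Fintype (Y i)]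
variable {Ω : Type*} [Fintype Ω] (p : Ω → ℝ) (q : ∀ i : Q, Ω → Y i → ℝ)

lemma jointProb_nonneg (hp : ∀ ω, 0 ≤ p ω) (hq : ∀ i ω y, 0 ≤ q i ω y)
    (A : Finset Q) (z : ∀ i : A, Y i) : 0 ≤ jointProb p q A z :=
  Finset.sum_nonneg fun ω _ =>
    mul_nonneg (hp ω) (Finset.prod_nonneg fun i _ => hq i ω _)

lemma q_le_one (hq : ∀ i ω y, 0 ≤ q i ω y) (hq1 : ∀ i ω, ∑ y : Y i, q i ω y = 1)
    (i : Q) (ω : Ω) (v : Y i) : q i ω v ≤ 1 :=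
  (hq1 i ω) ▸ Finset.single_le_sum (fun y _ => hq i ω y) (Finset.mem_univ v)

lemma prodq_le_one (hq : ∀ i ω y, 0 ≤ q i ω y) (hq1 : ∀ i ω, ∑ y : Y i, q i ω y = 1)
    (ω : Ω) (A : Finset Q) (z : ∀ i : A, Y i) : ∏ i : A, q i ω (z i) ≤ 1 :=
  Finset.prod_le_one (fun i _ => hq i ω _) (fun i _ => q_le_one q hq hq1 i ω _)

lemma sum_prodq (hq1 : ∀ i ω, ∑ y : Y i, q i ω y = 1) (ω : Ω) (D : Finset Q) :
    ∑ w : ∀ i : D, Y i, ∏ i : D, q i ω (w i) = 1 := by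
  rw [sum_tuple_prod D (fun j v => q j ω v)]
  exact Finset.prod_eq_one fun i _ => hq1 i ω

lemma sum_glue_joint (hq1 : ∀ i ω, ∑ y : Y i, q i ω y = 1)
    {A D U : Finset Q} (hU : U = A ∪ D) (hd : Disjoint A D) (z : ∀ i : A, Y i) :
    ∑ w : ∀ i : D, Y i, jointProb p q U (glueFn hU z w) = jointProb p q A z := by
  unfold jointProb
  rw [Finset.sum_comm]
  refine Finset.sum_congr rfl fun ω _ => ?_
  calc ∑ w : ∀ i : D, Y i, p ω * ∏ i : U, q i ω (glueFn hU z w i)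
      = ∑ w : ∀ i : D, Y i,
          (p ω * ∏ i : A, q i ω (z i)) * ∏ i : D, q i ω (w i) :=
        Finset.sum_congr rfl fun w _ => by
          rw [prod_split hU hd (fun j v => q j ω v)]; ring
    _ = (p ω * ∏ i : A, q i ω (z i)) * ∑ w : ∀ i : D, Y i, ∏ i : D, q i ω (w i) :=
        (Finset.mul_sum _ _ _).symm
    _ = _ := by rw [sum_prodq q hq1 ω D, mul_one]

lemma sum_joint_total (hp1 : ∑ ω : Ω, p ω = 1)
    (hq1 : ∀ i ω, ∑ y : Y i, q i ω y = 1) (U : Finset Q) :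
    ∑ y : ∀ i : U, Y i, jointProb p q U y = 1 := by
  unfold jointProb
  rw [Finset.sum_comm]
  calc ∑ ω : Ω, ∑ y : ∀ i : U, Y i, p ω * ∏ i : U, q i ω (y i)
      = ∑ ω : Ω, p ω * ∑ y : ∀ i : U, Y i, ∏ i : U, q i ω (y i) := by
        refine Finset.sum_congr rfl fun ω _ => (Finset.mul_sum _ _ _).symm
    _ = ∑ ω : Ω, p ω := by
        refine Finset.sum_congr rfl fun ω _ => by rw [sum_prodq q hq1 ω U, mul_one]
    _ = 1 := hp1

lemma sum_joint_mul (hq1 : ∀ i ω, ∑ y : Y i, q i ω y = 1)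
    {A D U : Finset Q} (hU : U = A ∪ D) (hd : Disjoint A D) (hA : A ⊆ U)
    (g : (∀ i : A, Y i) → ℝ) :
    ∑ y : ∀ i : U, Y i, jointProb p q U y * g (resFn hA y)
      = ∑ z : ∀ i : A, Y i, jointProb p q A z * g z := by
  rw [sum_split hU hd]
  refine Finset.sum_congr rfl fun z _ => ?_
  calc ∑ w : ∀ i : D, Y i, jointProb p q U (glueFn hU z w) * g (resFn hA (glueFn hU z w))
      = ∑ w : ∀ i : D, Y i, jointProb p q U (glueFn hU z w) * g z :=
        Finset.sum_congr rfl fun w _ => by rw [res_glue hU hA]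
    _ = (∑ w : ∀ i : D, Y i, jointProb p q U (glueFn hU z w)) * g z :=
        (Finset.sum_mul _ _ _).symm
    _ = _ := by rw [sum_glue_joint p q hq1 hU hd z]

lemma jointProb_mono (hp : ∀ ω, 0 ≤ p ω) (hq : ∀ i ω y, 0 ≤ q i ω y)
    (hq1 : ∀ i ω, ∑ y : Y i, q i ω y = 1)
    {A U : Finset Q} (hA : A ⊆ U) (y : ∀ i : U, Y i) :
    jointProb p q U y ≤ jointProb p q A (resFn hA y) := by
  have hU : U = A ∪ (U \ A) := (Finset.union_sdiff_of_subset hA).symm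
  have hd : Disjoint A (U \ A) := Finset.disjoint_sdiff
  have hD : (U \ A) ⊆ U := Finset.sdiff_subset
  refine Finset.sum_le_sum fun ω _ => ?_
  have hy : y = glueFn hU (resFn hA y) (resFn hD y) := (glue_res hU hA hD y).symm
  conv_lhs => rw [hy]
  rw [prod_split hU hd (fun j v => q j ω v)]
  refine mul_le_mul_of_nonneg_left ?_ (hp ω)
  exact mul_le_of_le_one_right (Finset.prod_nonneg fun i _ => hq _ ω _)
    (prodq_le_one q hq hq1 ω _ _)

lemma mul_log_split (x y : ℝ) :
    x * y * Real.log (x * y) = y * (x * Real.log x) + x * (y * Real.log y) := by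
  rcases eq_or_ne x 0 with h | h
  · simp [h]
  rcases eq_or_ne y 0 with h' | h'
  · simp [h']
  rw [Real.log_mul h h']; ring

lemma condEntropy_insert (hq1 : ∀ i ω, ∑ y : Y i, q i ω y = 1)
    (e : Q) (A : Finset Q) (he : e ∉ A) :
    condEntropyAnswers p q (insert e A)
      = condEntropyAnswers p q A + condEntropyAnswers p q {e} := by
  have hU : (insert e A : Finset Q) = A ∪ {e} := by
    rw [Finset.union_comm]; exact Finset.insert_eq e A
  have hd : Disjoint A ({e} : Finset Q) := by simp [he]
  unfold condEntropyAnswers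
  rw [← neg_add, ← Finset.sum_add_distrib]
  refine congrArg Neg.neg (Finset.sum_congr rfl fun ω _ => ?_)
  rw [← mul_add]
  refine congrArg (p ω * ·) ?_
  rw [sum_split hU hd]
  calc ∑ z : ∀ i : A, Y i, ∑ w : ∀ i : ({e} : Finset Q), Y i,
        (∏ i : (insert e A : Finset Q), q i ω (glueFn hU z w i)) *
          Real.log (∏ i : (insert e A : Finset Q), q i ω (glueFn hU z w i))
      = ∑ z : ∀ i : A, Y i, ∑ w : ∀ i : ({e} : Finset Q), Y i,
          ((∏ i : ({e} : Finset Q), q i ω (w i)) *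
             ((∏ i : A, q i ω (z i)) * Real.log (∏ i : A, q i ω (z i))) +
           (∏ i : A, q i ω (z i)) *
             ((∏ i : ({e} : Finset Q), q i ω (w i)) *
                Real.log (∏ i : ({e} : Finset Q), q i ω (w i)))) := by
        refine Finset.sum_congr rfl fun z _ => Finset.sum_congr rfl fun w _ => ?_
        rw [prod_split hU hd (fun j v => q j ω v), mul_log_split]
    _ = ∑ z : ∀ i : A, Y i,
          ((∏ i : A, q i ω (z i)) * Real.log (∏ i : A, q i ω (z i)) +
            (∏ i : A, q i ω (z i)) *
              ∑ w : ∀ i : ({e} : Finset Q), Y i,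
                (∏ i : ({e} : Finset Q), q i ω (w i)) *
                  Real.log (∏ i : ({e} : Finset Q), q i ω (w i))) := by
        refine Finset.sum_congr rfl fun z _ => ?_
        rw [Finset.sum_add_distrib, ← Finset.sum_mul, ← Finset.mul_sum,
          sum_prodq q hq1 ω {e}, one_mul]
    _ = _ := by
        rw [Finset.sum_add_distrib, ← Finset.sum_mul, sum_prodq q hq1 ω A, one_mul]
        

end Prob

section Main

variable {Q : Type*} [DecidableEq Q] {Y : Q → Type*} [∀ i, Fintype (Y i)]
variable {Ω : Type*} [Fintype Ω] (p : Ω → ℝ) (q : ∀ i : Q, Ω → Y i → ℝ)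

lemma gibbs {ι : Type*} [Fintype ι] (a b : ι → ℝ) (ha : ∀ j, 0 ≤ a j)
    (hb : ∀ j, 0 ≤ b j) (hab : ∀ j, a j ≠ 0 → b j ≠ 0)
    (hsum : ∑ j, b j ≤ ∑ j, a j) :
    ∑ j, a j * Real.log (b j / a j) ≤ 0 := by
  have h1 : ∀ j, a j * Real.log (b j / a j) ≤ b j - a j := by
    intro j
    rcases (ha j).eq_or_lt with h | h
    · simpa [← h] using hb j
    · have hbj : 0 < b j := lt_of_le_of_ne (hb j) (Ne.symm (hab j h.ne'))
      have hlog := Real.log_le_sub_one_of_pos (div_pos hbj h)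
      calc a j * Real.log (b j / a j) ≤ a j * (b j / a j - 1) :=
            mul_le_mul_of_nonneg_left hlog h.le
        _ = b j - a j := by field_simp
  calc ∑ j, a j * Real.log (b j / a j) ≤ ∑ j, (b j - a j) :=
        Finset.sum_le_sum fun j _ => h1 j
    _ = ∑ j, b j - ∑ j, a j := Finset.sum_sub_distrib _ _
    _ ≤ 0 := by linarith

lemma entropy_submodular (hp : ∀ ω, 0 ≤ p ω) (hp1 : ∑ ω : Ω, p ω = 1)
    (hq : ∀ i ω y, 0 ≤ q i ω y) (hq1 : ∀ i ω, ∑ y : Y i, q i ω y = 1)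
    {S T : Finset Q} (hST : S ⊆ T) {e : Q} (he : e ∉ T) :
    entropyAnswers p q (insert e T) + entropyAnswers p q S ≤
      entropyAnswers p q (insert e S) + entropyAnswers p q T := by
  classical
  have hTU : T ⊆ insert e T := Finset.subset_insert e T
  have hSU : S ⊆ insert e T := hST.trans hTU
  have hSeU : insert e S ⊆ insert e T := Finset.insert_subset_insert e hST
  have hU : (insert e T : Finset Q) = T ∪ {e} := by
    rw [Finset.union_comm]; exact Finset.insert_eq e T
  have hSe : (insert e S : Finset Q) = S ∪ {e} := by
    rw [Finset.union_comm]; exact Finset.insert_eq e S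
  have hdT : Disjoint T ({e} : Finset Q) := by simp [he]
  have heS : e ∉ S := fun h => he (hST h)
  have hdS : Disjoint S ({e} : Finset Q) := by simp [heS]
  set a : (∀ i : (insert e T : Finset Q), Y i) → ℝ :=
    fun y => jointProb p q (insert e T) y with ha_def
  set b : (∀ i : (insert e T : Finset Q), Y i) → ℝ := fun y =>
    jointProb p q T (resFn hTU y) *
      jointProb p q (insert e S) (resFn hSeU y) /
        jointProb p q S (resFn hSU y) with hb_def
  have ha0 : ∀ y, 0 ≤ a y := fun y => jointProb_nonneg p q hp hq _ y
  have hb0 : ∀ y, 0 ≤ b y := fun y =>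
    div_nonneg (mul_nonneg (jointProb_nonneg p q hp hq _ _)
      (jointProb_nonneg p q hp hq _ _)) (jointProb_nonneg p q hp hq _ _)
  have ha_sum : ∑ y, a y = 1 := sum_joint_total p q hp1 hq1 _
  -- the sum of b is 1
  have key : ∀ (t : ∀ i : T, Y i) (w : ∀ i : ({e} : Finset Q), Y i),
      b (glueFn hU t w) = jointProb p q T t *
        jointProb p q (insert e S) (glueFn hSe (resFn hST t) w) /
          jointProb p q S (resFn hST t) := by
    intro t w
    have h1 : resFn hTU (glueFn hU t w) = t := res_glue hU hTU t w
    have h2 : resFn hSU (glueFn hU t w) = resFn hST t := by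
      funext i; simp [resFn, glueFn, hST i.2]
    have h3 : resFn hSeU (glueFn hU t w) = glueFn hSe (resFn hST t) w := by
      funext i
      by_cases h : (i : Q) ∈ S
      · simp [resFn, glueFn, h, hST h]
      · have hie : (i : Q) = e := (Finset.mem_insert.1 i.2).resolve_right h
        have hiT : (i : Q) ∉ T := by rw [hie]; exact he
        simp [resFn, glueFn, h, hiT]
    rw [hb_def]
    simp only [h1, h2, h3]
  have hb_sum : ∑ y, b y = 1 := by
    rw [sum_split hU hdT]
    have row : ∀ t : ∀ i : T, Y i,
        (∑ w : ∀ i : ({e} : Finset Q), Y i, b (glueFn hU t w))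
          = jointProb p q T t := by
      intro t
      calc ∑ w : ∀ i : ({e} : Finset Q), Y i, b (glueFn hU t w)
          = ∑ w : ∀ i : ({e} : Finset Q), Y i,
              (jointProb p q T t / jointProb p q S (resFn hST t)) *
                jointProb p q (insert e S) (glueFn hSe (resFn hST t) w) := by
            refine Finset.sum_congr rfl fun w _ => ?_; rw [key t w]; ring
        _ = (jointProb p q T t / jointProb p q S (resFn hST t)) *
              jointProb p q S (resFn hST t) := by
            rw [← Finset.mul_sum, sum_glue_joint p q hq1 hSe hdS]
        _ = jointProb p q T t := by
            by_cases hC : jointProb p q S (resFn hST t) = 0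
            · have hT0 : jointProb p q T t = 0 :=
                le_antisymm (hC ▸ jointProb_mono p q hp hq hq1 hST t)
                  (jointProb_nonneg p q hp hq T t)
              simp [hC, hT0]
            · field_simp
    exact (Finset.sum_congr rfl fun t _ => row t).trans
      (sum_joint_total p q hp1 hq1 T)
  have hsupp : ∀ y, a y ≠ 0 → b y ≠ 0 := by
    intro y hy
    have h0 : 0 < a y := lt_of_le_of_ne (ha0 y) (Ne.symm hy)
    have h1 : 0 < jointProb p q T (resFn hTU y) :=
      lt_of_lt_of_le h0 (jointProb_mono p q hp hq hq1 hTU y)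
    have h2 : 0 < jointProb p q (insert e S) (resFn hSeU y) :=
      lt_of_lt_of_le h0 (jointProb_mono p q hp hq hq1 hSeU y)
    have h3 : 0 < jointProb p q S (resFn hSU y) :=
      lt_of_lt_of_le h0 (jointProb_mono p q hp hq hq1 hSU y)
    exact ne_of_gt (div_pos (mul_pos h1 h2) h3)
  have hG : ∑ y, a y * Real.log (b y / a y) ≤ 0 :=
    gibbs a b ha0 hb0 hsupp (by rw [hb_sum, ha_sum])
  -- pointwise decomposition of the logarithm
  have hpt : ∀ y, a y * Real.log (b y / a y) =
      a y * Real.log (jointProb p q T (resFn hTU y)) +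
        a y * Real.log (jointProb p q (insert e S) (resFn hSeU y)) -
          a y * Real.log (jointProb p q S (resFn hSU y)) -
            a y * Real.log (a y) := by
    intro y
    by_cases hy : a y = 0
    · simp [hy]
    · have h0 : 0 < a y := lt_of_le_of_ne (ha0 y) (Ne.symm hy)
      have h1 : 0 < jointProb p q T (resFn hTU y) :=
        lt_of_lt_of_le h0 (jointProb_mono p q hp hq hq1 hTU y)
      have h2 : 0 < jointProb p q (insert e S) (resFn hSeU y) :=
        lt_of_lt_of_le h0 (jointProb_mono p q hp hq hq1 hSeU y)
      have h3 : 0 < jointProb p q S (resFn hSU y) :=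
        lt_of_lt_of_le h0 (jointProb_mono p q hp hq hq1 hSU y)
      rw [Real.log_div (hsupp y hy) hy, hb_def]
      dsimp only
      rw [Real.log_div (mul_ne_zero h1.ne' h2.ne') h3.ne',
        Real.log_mul h1.ne' h2.ne']
      ring
  have hent : ∀ A : Finset Q,
      ∑ z : ∀ i : A, Y i, jointProb p q A z * Real.log (jointProb p q A z)
        = -(entropyAnswers p q A) := fun A => by
    simp [entropyAnswers]
  have hUS : (insert e T : Finset Q) = S ∪ (insert e T \ S) :=
    (Finset.union_sdiff_of_subset hSU).symm
  have hUSe : (insert e T : Finset Q)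
      = insert e S ∪ (insert e T \ insert e S) :=
    (Finset.union_sdiff_of_subset hSeU).symm
  have mT : ∑ y, a y * Real.log (jointProb p q T (resFn hTU y))
      = -(entropyAnswers p q T) := by
    rw [ha_def]
    exact (sum_joint_mul p q hq1 hU hdT hTU
      (fun t => Real.log (jointProb p q T t))).trans (hent T)
  have mSe : ∑ y, a y * Real.log (jointProb p q (insert e S) (resFn hSeU y))
      = -(entropyAnswers p q (insert e S)) := by
    rw [ha_def]
    exact (sum_joint_mul p q hq1 hUSe Finset.disjoint_sdiff hSeU
      (fun z => Real.log (jointProb p q (insert e S) z))).trans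
      (hent (insert e S))
  have mS : ∑ y, a y * Real.log (jointProb p q S (resFn hSU y))
      = -(entropyAnswers p q S) := by
    rw [ha_def]
    exact (sum_joint_mul p q hq1 hUS Finset.disjoint_sdiff hSU
      (fun z => Real.log (jointProb p q S z))).trans (hent S)
  have mU : ∑ y, a y * Real.log (a y)
      = -(entropyAnswers p q (insert e T)) := by
    rw [ha_def]
    exact hent (insert e T)
  have decomp : ∑ y, a y * Real.log (b y / a y)
      = -(entropyAnswers p q T) + -(entropyAnswers p q (insert e S))
          - -(entropyAnswers p q S) - -(entropyAnswers p q (insert e T)) := by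
    rw [Finset.sum_congr rfl fun y _ => hpt y]
    rw [Finset.sum_sub_distrib, Finset.sum_sub_distrib, Finset.sum_add_distrib,
      mT, mSe, mS, mU]
  rw [decomp] at hG
  linarith

end Main

end MISub

/-- Submodularity of mutual information: the marginal information gain of an
additional query is smaller when more queries have already been made. -/
theorem mutualInfoQueries_submodular {Ω Q : Type*} [Fintype Ω] [Fintype Q]
    [DecidableEq Q] {Y : Q → Type*} [∀ i, Fintype (Y i)]
    (p : Ω → ℝ) (q : ∀ i : Q, Ω → Y i → ℝ)
    (hp : ∀ ω, 0 ≤ p ω) (hp1 : ∑ ω : Ω, p ω = 1)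
    (hq : ∀ (i : Q) (ω : Ω) (y : Y i), 0 ≤ q i ω y)
    (hq1 : ∀ (i : Q) (ω : Ω), ∑ y : Y i, q i ω y = 1) :
    ∀ S T : Finset Q, S ⊆ T → ∀ e : Q, e ∉ T →
      mutualInfoQueries p q (insert e T) - mutualInfoQueries p q T ≤
        mutualInfoQueries p q (insert e S) - mutualInfoQueries p q S := by
  intro S T hST e he
  have heS : e ∉ S := fun h => he (hST h)
  have hT := MISub.condEntropy_insert p q hq1 e T he
  have hS := MISub.condEntropy_insert p q hq1 e S heS
  have hkey := MISub.entropy_submodular p q hp hp1 hq hq1 hST he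
  simp only [mutualInfoQueries, hT, hS]
  linarith
end
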